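/- arXiv:1902.09803 — 3 statements merged into one kernel-verified Lean document; each statement's English description precedes it below -/
import Mathlib

section
/- Let θ, θ_true, X ∈ R^d. Then there exists a real number c with e^{−|(θ_true−θ)ᵀX|} ≤ c ≤ e^{|(θ_true−θ)ᵀX|} such that E_{y}[ y Xᵀ(θ_true−θ) / (1+e^{yθᵀX}) ] = c · ((θ_true−θ)ᵀX)² / ((1+e^{θᵀX})(1+e^{−θᵀX})), where y ∈ {−1,1} is distributed as P(y = s) = 1/(1+e^{−s θ_trueᵀ X}). -/
/-!
Write `a = θᵀX`, `u = (θ_true - θ)ᵀX` and `σ` for the sigmoid. The expectation equals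
`u (σ(a + u) - σ(a))` and the denominator is `1 / σ'(a)`, where `σ'(x) = σ(x) σ(-x)`.
By the mean value theorem `σ(a + u) - σ(a) = u σ'(ξ)` with `|ξ - a| ≤ |u|`, so `c = σ'(ξ) / σ'(a)`.
Finally `σ'(x) = 1 / (2 + eˣ + e⁻ˣ)`, and comparing `eˣ, e⁻ˣ` termwise with `eʸ, e⁻ʸ` gives
`σ'(x) ≤ e^|x - y| σ'(y)`.
-/

open Matrix Real Set

theorem exists_mem_uIcc_sub_eq_mul_of_hasDerivAt {f f' : ℝ → ℝ}
    (hf : ∀ x, HasDerivAt f (f' x) x) (a b : ℝ) :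
    ∃ ξ ∈ uIcc a b, f b - f a = (b - a) * f' ξ := by
  have hcont : Continuous f := continuous_iff_continuousAt.2 fun x ↦ (hf x).continuousAt
  rcases lt_trichotomy a b with hab | rfl | hab
  · obtain ⟨ξ, hξ, h⟩ := exists_hasDerivAt_eq_slope f f' hab hcont.continuousOn fun x _ ↦ hf x
    refine ⟨ξ, Ioo_subset_Icc_self.trans Icc_subset_uIcc hξ, ?_⟩
    rw [h, mul_div_cancel₀ _ (sub_ne_zero.2 hab.ne')]
  · exact ⟨a, left_mem_uIcc, by simp⟩
  · obtain ⟨ξ, hξ, h⟩ := exists_hasDerivAt_eq_slope f f' hab hcont.continuousOn fun x _ ↦ hf x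
    refine ⟨ξ, Ioo_subset_Icc_self.trans Icc_subset_uIcc' hξ, ?_⟩
    rw [h, ← neg_sub a b, ← neg_sub (f a), neg_mul, mul_div_cancel₀ _ (sub_ne_zero.2 hab.ne')]

theorem hasDerivAt_sigmoid' (x : ℝ) : HasDerivAt sigmoid (sigmoid x * sigmoid (-x)) x := by
  rw [sigmoid_neg]
  exact hasDerivAt_sigmoid x

theorem sigmoid_mul_sigmoid_neg (x : ℝ) :
    sigmoid x * sigmoid (-x) = (2 + exp x + exp (-x))⁻¹ := by
  rw [sigmoid_def, sigmoid_def, neg_neg, ← mul_inv]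
  congr 1
  rw [add_mul, one_mul, mul_add, mul_one, ← exp_add, neg_add_cancel, exp_zero]
  ring

theorem sigmoid_mul_sigmoid_neg_le_exp_abs_mul (x y : ℝ) :
    sigmoid x * sigmoid (-x) ≤ exp |x - y| * (sigmoid y * sigmoid (-y)) := by
  have h1 : 1 ≤ exp |x - y| := one_le_exp (abs_nonneg _)
  have h2 : exp y ≤ exp |x - y| * exp x := by
    rw [← exp_add]; gcongr; linarith [neg_abs_le (x - y)]
  have h3 : exp (-y) ≤ exp |x - y| * exp (-x) := by
    rw [← exp_add]; gcongr; linarith [le_abs_self (x - y)]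
  rw [sigmoid_mul_sigmoid_neg, sigmoid_mul_sigmoid_neg, ← div_eq_mul_inv,
    inv_le_iff_one_le_mul₀' (by positivity), mul_div_assoc', le_div_iff₀ (by positivity)]
  nlinarith [exp_pos x, exp_pos (-x)]

theorem exp_neg_abs_le_sigmoid_ratio (x y : ℝ) :
    exp (-|x - y|) ≤ sigmoid x * sigmoid (-x) / (sigmoid y * sigmoid (-y)) := by
  have hy : 0 < sigmoid y * sigmoid (-y) := mul_pos (sigmoid_pos _) (sigmoid_pos _)
  rw [le_div_iff₀ hy, exp_neg, inv_mul_le_iff₀ (exp_pos _), abs_sub_comm]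
  exact sigmoid_mul_sigmoid_neg_le_exp_abs_mul y x

theorem sigmoid_ratio_le_exp_abs (x y : ℝ) :
    sigmoid x * sigmoid (-x) / (sigmoid y * sigmoid (-y)) ≤ exp |x - y| :=
  div_le_of_le_mul₀ (mul_pos (sigmoid_pos _) (sigmoid_pos _)).le (exp_pos _).le
    (sigmoid_mul_sigmoid_neg_le_exp_abs_mul x y)

theorem logistic_expected_gradient_eq_mul_sigmoid_sub (a u : ℝ) :
    (1 / (1 + exp (-(a + u)))) * ((1 : ℝ) * u / (1 + exp ((1 : ℝ) * a))) +
        (1 / (1 + exp (a + u))) * ((-1 : ℝ) * u / (1 + exp ((-1 : ℝ) * a))) =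
      u * (sigmoid (a + u) - sigmoid a) := by
  have h (x : ℝ) : 1 / (1 + exp x) = sigmoid (-x) := by rw [sigmoid_def, neg_neg, one_div]
  simp only [one_mul, neg_one_mul]
  rw [div_eq_mul_one_div u, div_eq_mul_one_div (-u), h, h, h, h, neg_neg, neg_neg, sigmoid_neg,
    sigmoid_neg (a + u)]
  ring

theorem div_one_add_exp_mul_one_add_exp_neg_eq (u a : ℝ) :
    u ^ 2 / ((1 + exp a) * (1 + exp (-a))) = u ^ 2 * (sigmoid a * sigmoid (-a)) := by
  rw [sigmoid_def, sigmoid_def, neg_neg, div_eq_mul_inv, mul_inv, mul_comm (1 + exp a)⁻¹]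

/-- Key Bernstein-type property of the expected logistic gradient in the
well-specified logistic model (Proposition `propertyexpectedbound`).
The expectation over `y ∈ {-1,1}` with `P(y = s) = 1/(1+exp(-s θ_trueᵀX))`
is written out explicitly. -/
theorem expected_gradient_property {d : ℕ} (θ θtrue X : Fin d → ℝ) :
    ∃ c : ℝ,
      Real.exp (-|(θtrue - θ) ⬝ᵥ X|) ≤ c ∧ c ≤ Real.exp (|(θtrue - θ) ⬝ᵥ X|) ∧
      (1 / (1 + Real.exp (-(θtrue ⬝ᵥ X)))) *
          ((1 : ℝ) * ((θtrue - θ) ⬝ᵥ X) / (1 + Real.exp ((1 : ℝ) * (θ ⬝ᵥ X)))) +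
        (1 / (1 + Real.exp (θtrue ⬝ᵥ X))) *
          ((-1 : ℝ) * ((θtrue - θ) ⬝ᵥ X) / (1 + Real.exp ((-1 : ℝ) * (θ ⬝ᵥ X)))) =
      c * (((θtrue - θ) ⬝ᵥ X) ^ 2 /
        ((1 + Real.exp (θ ⬝ᵥ X)) * (1 + Real.exp (-(θ ⬝ᵥ X))))) := by
  have hsplit : θtrue ⬝ᵥ X = θ ⬝ᵥ X + (θtrue - θ) ⬝ᵥ X := by rw [sub_dotProduct]; ring
  set a := θ ⬝ᵥ X
  set u := (θtrue - θ) ⬝ᵥ X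
  obtain ⟨ξ, hξ, hmvt⟩ := exists_mem_uIcc_sub_eq_mul_of_hasDerivAt hasDerivAt_sigmoid' a (a + u)
  have hdist : |ξ - a| ≤ |u| := by simpa using abs_sub_left_of_mem_uIcc hξ
  refine ⟨sigmoid ξ * sigmoid (-ξ) / (sigmoid a * sigmoid (-a)), ?_, ?_, ?_⟩
  · exact (exp_le_exp.2 (neg_le_neg hdist)).trans (exp_neg_abs_le_sigmoid_ratio ξ a)
  · exact (sigmoid_ratio_le_exp_abs ξ a).trans (exp_le_exp.2 hdist)
  · have ha : sigmoid a * sigmoid (-a) ≠ 0 := (mul_pos (sigmoid_pos _) (sigmoid_pos _)).ne'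
    rw [hsplit, logistic_expected_gradient_eq_mul_sigmoid_sub,
      div_one_add_exp_mul_one_add_exp_neg_eq, hmvt, add_sub_cancel_left, mul_left_comm _ (u ^ 2),
      div_mul_cancel₀ _ ha]
    ring
end

section
/- Let A be a positive definite d×d real matrix and x ∈ R^d. Then xᵀ(A + xxᵀ)⁻¹x = 1 − det(A)/det(A + xxᵀ), and consequently xᵀ(A + xxᵀ)⁻¹x ≤ log( det(A + xxᵀ)/det(A) ). -/
open Matrix

lemma posSemidef_vecMulVec_self {d : ℕ} (x : Fin d → ℝ) :
    (vecMulVec x x).PosSemidef := by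
  refine PosSemidef.of_dotProduct_mulVec_nonneg ?_ ?_
  · ext i j
    simp [IsHermitian, conjTranspose, vecMulVec_apply, mul_comm]
  · intro y
    have h : y ⬝ᵥ (vecMulVec x x *ᵥ y) = (x ⬝ᵥ y) * (x ⬝ᵥ y) := by
      simp only [dotProduct, mulVec, vecMulVec_apply, Finset.mul_sum, Finset.sum_mul]
      rw [Finset.sum_comm]
      congr 1; ext i; congr 1; ext j; ring
    simp only [RCLike.star_def, starRingEnd_apply, star_trivial]
    rw [h]
    exact mul_self_nonneg _

/-- Quadratic form identity and log-determinant bound (Lemma 11.11 of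
Cesa-Bianchi & Lugosi): for positive definite `A` and any vector `x`,
`xᵀ(A + xxᵀ)⁻¹x = 1 - det A / det (A + xxᵀ)` and hence
`xᵀ(A + xxᵀ)⁻¹x ≤ log (det (A + xxᵀ) / det A)`. -/
theorem quadratic_form_det_bound {d : ℕ} (A : Matrix (Fin d) (Fin d) ℝ)
    (hA : A.PosDef) (x : Fin d → ℝ) :
    x ⬝ᵥ ((A + vecMulVec x x)⁻¹ *ᵥ x) =
      1 - A.det / (A + vecMulVec x x).det ∧
    x ⬝ᵥ ((A + vecMulVec x x)⁻¹ *ᵥ x) ≤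
      Real.log ((A + vecMulVec x x).det / A.det) := by
  set B := A + vecMulVec x x with hB
  have hBpd : B.PosDef := hA.add_posSemidef (posSemidef_vecMulVec_self x)
  have hBdet : 0 < B.det := hBpd.det_pos
  have hAdet : 0 < A.det := hA.det_pos
  -- matrix determinant lemma: det A = det B * (1 - xᵀ B⁻¹ x)
  have hAB : A = B + replicateCol (Fin 1) (-x) * replicateRow (Fin 1) x := by
    erw [← vecMulVec_eq (Fin 1), hB]
    ext i j
    simp only [Matrix.add_apply, vecMulVec_apply, Pi.neg_apply]
    ring
  have hdet : A.det = B.det * (1 - x ⬝ᵥ (B⁻¹ *ᵥ x)) := by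
    erw [hAB, det_add_replicateCol_mul_replicateRow (isUnit_iff_ne_zero.mpr hBdet.ne')]
    congr 1
    rw [Matrix.mul_assoc, ← replicateCol_mulVec]
    simp [Matrix.det_fin_one, Matrix.add_apply, replicateRow_mul_replicateCol_apply, mulVec_neg,
      sub_eq_add_neg]
  have key : x ⬝ᵥ (B⁻¹ *ᵥ x) = 1 - A.det / B.det := by
    field_simp [hdet]
    rw [hdet]; ring
  refine ⟨key, ?_⟩
  rw [key]
  have ht : (0:ℝ) < A.det / B.det := div_pos hAdet hBdet
  have hlog := Real.log_le_sub_one_of_pos ht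
  have hinv : Real.log (B.det / A.det) = - Real.log (A.det / B.det) := by
    rw [← Real.log_inv]
    congr 1
    field_simp
  linarith
end

section
/- Let (l_t)_{t≥1} be a sequence of nonnegative reals satisfying l_{t+1} ≤ l_t (1 − c/t) + b/t² for all t ≥ 1, where 1 < c < 2 and b > 0. Then for all t ≥ 2, l_t ≤ 4b/((c−1) t). -/
/-!
The bound `l_t ≤ K / t` propagates through the recursion as soon as `b ≤ K (c - 1)` and the factor
`1 - c / t` is nonnegative: then `K/t · (1 - c/t) + b/t² ≤ K/(t+1)` reduces to `b (t+1) ≤ K ((c-1) t + c)`.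
Taking `K = 4b/(c-1)`, the case `t = 2` follows from `l₂ ≤ l₁ (1 - c) + b ≤ b`.
-/

lemma recursion_step_le_div {K b c n x : ℝ} (hn : 0 < n) (hcn : c ≤ n) (hK : 0 ≤ K)
    (hbK : b ≤ K * (c - 1)) (hx : x ≤ K / n) :
    x * (1 - c / n) + b / n ^ 2 ≤ K / (n + 1) := by
  have hfac : 0 ≤ 1 - c / n := by rwa [sub_nonneg, div_le_one hn]
  calc x * (1 - c / n) + b / n ^ 2
      ≤ K / n * (1 - c / n) + b / n ^ 2 := by gcongr
    _ = (K * (n - c) + b) / n ^ 2 := by field_simp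
    _ ≤ K / (n + 1) := by
      rw [div_le_div_iff₀ (by positivity) (by positivity)]
      nlinarith [mul_le_mul_of_nonneg_right hbK hn.le]

theorem le_div_of_recursion {l : ℕ → ℝ} {K b c : ℝ} {m : ℕ} (hm : 0 < m) (hcm : c ≤ m)
    (hK : 0 ≤ K) (hbK : b ≤ K * (c - 1))
    (hrec : ∀ t : ℕ, m ≤ t → l (t + 1) ≤ l t * (1 - c / t) + b / (t : ℝ) ^ 2)
    (hbase : l m ≤ K / m) :
    ∀ t : ℕ, m ≤ t → l t ≤ K / t := by
  intro t ht
  induction t, ht using Nat.le_induction with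
  | base => exact hbase
  | succ n hmn ih =>
    have hn : (0 : ℝ) < n := by exact_mod_cast hm.trans_le hmn
    have hcn : c ≤ n := hcm.trans (by exact_mod_cast hmn)
    push_cast
    exact (hrec n hmn).trans (recursion_step_le_div hn hcn hK hbK ih)

/-- Corollary `boundpowerk`: a nonnegative sequence satisfying the recursion
`l_{t+1} ≤ l_t (1 - c/t) + b/t²` with `1 < c < 2` and `b > 0` satisfies
`l_t ≤ 4b/((c-1)t)` for all `t ≥ 2`. -/
theorem recursive_sequence_bound (l : ℕ → ℝ) (b c : ℝ)
    (hc1 : 1 < c) (hc2 : c < 2) (hb : 0 < b)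
    (hnonneg : ∀ t, 0 ≤ l t)
    (hrec : ∀ t : ℕ, 1 ≤ t →
      l (t + 1) ≤ l t * (1 - c / t) + b / (t : ℝ) ^ 2) :
    ∀ t : ℕ, 2 ≤ t → l t ≤ 4 * b / ((c - 1) * t) := by
  intro t ht
  have hc : 0 < c - 1 := by linarith
  have hbK : b ≤ 4 * b / (c - 1) * (c - 1) := by
    rw [div_mul_cancel₀ _ hc.ne']
    linarith
  have hbase : l 2 ≤ 4 * b / (c - 1) / (2 : ℕ) := by
    have hl₂ : l 2 ≤ b := by
      have h₁ := hrec 1 le_rfl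
      norm_num at h₁
      nlinarith [hnonneg 1]
    rw [div_div, le_div_iff₀ (by positivity)]
    push_cast
    nlinarith
  rw [← div_div]
  exact le_div_of_recursion two_pos hc2.le (by positivity) hbK
    (fun t ht => hrec t (by omega)) hbase t ht
end
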